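/- Let W be a standard one-dimensional Brownian motion and Δt > 0. Define ΔU := (Δt/2)·W_{Δt} − ∫₀^{Δt} W_t dt, I_{(1,0,0)} := ∫₀^{Δt} ∫₀^t W_s ds dt, I_{(0,1,0)} := ∫₀^{Δt} ( t·W_t − ∫₀^t W_s ds ) dt, and ΔV := (1/9)·( I_{(0,1,0)} − I_{(1,0,0)} − Δt·ΔU ). Then E[ ΔV² ] = Δt⁵/2430. -/

import Mathlib

/-!
Along every continuous path `f`, Cauchy's formula `∫₀^Δ ∫₀^t f = ∫₀^Δ (Δ - t) f(t) dt` turns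
`9 ΔV` into the linear functional `Y - (Δ²/2) f(Δ)` with `Y = ∫₀^Δ (3t - Δ) f(t) dt`. Its second
moment is then read off from the covariance `E[W_s W_t] = min s t` by Fubini's theorem:
`E[Y²] = 17 Δ⁵/60`, `E[Y W_Δ] = Δ³/2` and `E[W_Δ²] = Δ`, so `E[(9 ΔV)²] = Δ⁵/30`.
-/

open MeasureTheory ProbabilityTheory Function Set
open scoped NNReal

/-- A standard one-dimensional Brownian motion on a probability space `(Ω, P)`:
almost surely continuous sample paths, `W 0 = 0`, independent increments, and
Gaussian increments `W t - W s ~ N(0, t - s)` for `0 ≤ s ≤ t`. -/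
structure IsBrownianMotion {Ω : Type*} [MeasurableSpace Ω] (P : Measure Ω)
    (W : ℝ → Ω → ℝ) : Prop where
  measurable : ∀ t, Measurable (W t)
  cont : ∀ᵐ ω ∂P, Continuous fun t => W t ω
  init : ∀ᵐ ω ∂P, W 0 ω = 0
  gaussian_incr : ∀ s t : ℝ, 0 ≤ s → s ≤ t →
    P.map (fun ω => W t ω - W s ω) = gaussianReal 0 (Real.toNNReal (t - s))
  indep_incr : ∀ (n : ℕ) (ts : Fin (n + 1) → ℝ), Monotone ts → (∀ i, 0 ≤ ts i) →
    iIndepFun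
      (fun i : Fin n => fun ω => W (ts i.succ) ω - W (ts i.castSucc) ω) P

section SquareIntegrableProcess

variable {T Ω : Type*} [MeasurableSpace T] {mΩ : MeasurableSpace Ω} {P : Measure Ω} {C D : ℝ}

lemma integral_abs_mul_le_of_integral_sq_le {f g : Ω → ℝ} (hf : MemLp f 2 P) (hg : MemLp g 2 P)
    (hfC : ∫ ω, f ω ^ 2 ∂P ≤ C) (hgD : ∫ ω, g ω ^ 2 ∂P ≤ D) :
    ∫ ω, |f ω * g ω| ∂P ≤ (C + D) / 2 := by
  have hsum := hf.integrable_sq.add hg.integrable_sq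
  calc ∫ ω, |f ω * g ω| ∂P ≤ ∫ ω, (f ω ^ 2 + g ω ^ 2) / 2 ∂P := by
        refine integral_mono_of_nonneg (.of_forall fun _ => abs_nonneg _) (hsum.div_const 2)
          (.of_forall fun ω => ?_)
        dsimp only
        rw [abs_mul]
        nlinarith [sq_nonneg (|f ω| - |g ω|), sq_abs (f ω), sq_abs (g ω)]
    _ = ((∫ ω, f ω ^ 2 ∂P) + ∫ ω, g ω ^ 2 ∂P) / 2 := by
        rw [integral_div, integral_add hf.integrable_sq hg.integrable_sq]
    _ ≤ (C + D) / 2 := by linarith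

variable [SFinite P] {μ ν : Measure T} [IsFiniteMeasure μ] [IsFiniteMeasure ν] {X Y : T → Ω → ℝ}
  (hX : Measurable (uncurry X)) (hY : Measurable (uncurry Y))
  (hXC : ∀ᵐ s ∂μ, MemLp (X s) 2 P ∧ ∫ ω, X s ω ^ 2 ∂P ≤ C)
  (hYD : ∀ᵐ t ∂ν, MemLp (Y t) 2 P ∧ ∫ ω, Y t ω ^ 2 ∂P ≤ D)
include hX hY hXC hYD

lemma integrable_uncurry_mul_of_integral_sq_le :
    Integrable (uncurry fun (p : T × T) ω => X p.1 ω * Y p.2 ω) ((μ.prod ν).prod P) := by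
  have hmeas : Measurable (uncurry fun (p : T × T) ω => X p.1 ω * Y p.2 ω) :=
    (hX.comp (measurable_fst.fst.prodMk measurable_snd)).mul
      (hY.comp (measurable_fst.snd.prodMk measurable_snd))
  have hXY : ∀ᵐ p ∂(μ.prod ν), (MemLp (X p.1) 2 P ∧ ∫ ω, X p.1 ω ^ 2 ∂P ≤ C) ∧
      (MemLp (Y p.2) 2 P ∧ ∫ ω, Y p.2 ω ^ 2 ∂P ≤ D) :=
    (Measure.quasiMeasurePreserving_fst.ae hXC).and (Measure.quasiMeasurePreserving_snd.ae hYD)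
  rw [integrable_prod_iff hmeas.aestronglyMeasurable]
  constructor
  · filter_upwards [hXY] with p ⟨⟨hXp, _⟩, hYp, _⟩
    exact hXp.integrable_mul hYp
  · refine Integrable.mono' (integrable_const ((C + D) / 2))
      hmeas.aestronglyMeasurable.norm.integral_prod_right' ?_
    filter_upwards [hXY] with p ⟨⟨hXp, hXpC⟩, hYp, hYpD⟩
    simp only [uncurry_apply_pair, Real.norm_eq_abs]
    rw [abs_of_nonneg (integral_nonneg fun _ => abs_nonneg _)]
    exact integral_abs_mul_le_of_integral_sq_le hXp hYp hXpC hYpD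

lemma integrable_integral_mul_integral_of_integral_sq_le :
    Integrable (fun ω => (∫ s, X s ω ∂μ) * ∫ t, Y t ω ∂ν) P := by
  refine (integrable_uncurry_mul_of_integral_sq_le hX hY hXC hYD).integral_prod_right.congr
    (.of_forall fun ω => ?_)
  exact integral_prod_mul (X · ω) (Y · ω)

lemma integral_integral_mul_integral_of_integral_sq_le :
    ∫ ω, (∫ s, X s ω ∂μ) * (∫ t, Y t ω ∂ν) ∂P = ∫ s, ∫ t, ∫ ω, X s ω * Y t ω ∂P ∂ν ∂μ := by
  have hF := integrable_uncurry_mul_of_integral_sq_le hX hY hXC hYD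
  simp_rw [← integral_prod_mul]
  rw [← integral_integral_swap hF]
  exact integral_prod _ hF.integral_prod_left

end SquareIntegrableProcess

lemma integral_sub_const_mul_sq {Ω : Type*} {mΩ : MeasurableSpace Ω} {P : Measure Ω}
    {f g : Ω → ℝ} (hff : Integrable (fun ω => f ω * f ω) P)
    (hfg : Integrable (fun ω => f ω * g ω) P) (hgg : Integrable (fun ω => g ω * g ω) P) (c : ℝ) :
    ∫ ω, (f ω - c * g ω) ^ 2 ∂P =
      ∫ ω, f ω * f ω ∂P - 2 * c * ∫ ω, f ω * g ω ∂P + c ^ 2 * ∫ ω, g ω * g ω ∂P := by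
  have h (ω : Ω) : (f ω - c * g ω) ^ 2 =
      f ω * f ω - 2 * c * (f ω * g ω) + c ^ 2 * (g ω * g ω) := by ring
  have hsub : Integrable (fun ω => f ω * f ω - 2 * c * (f ω * g ω)) P := hff.sub (hfg.const_mul _)
  simp_rw [h]
  rw [integral_add hsub (hgg.const_mul _), integral_sub hff (hfg.const_mul _), integral_const_mul,
    integral_const_mul]

lemma measurable_uncurry_linear_mul {Ω : Type*} {mΩ : MeasurableSpace Ω} {X : ℝ → Ω → ℝ}
    (hX : Measurable (uncurry X)) (a b : ℝ) : Measurable (uncurry fun t ω => (a * t - b) * X t ω) :=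
  ((measurable_fst.const_mul a).sub_const b).mul hX

lemma exists_measurable_modification_of_ae_continuous {ι Ω : Type*} [TopologicalSpace ι]
    [TopologicalSpace.MetrizableSpace ι] [MeasurableSpace ι] [SecondCountableTopology ι]
    [OpensMeasurableSpace ι]
    {mΩ : MeasurableSpace Ω} {P : Measure Ω} {W : ι → Ω → ℝ} (hW : ∀ t, Measurable (W t))
    (hcont : ∀ᵐ ω ∂P, Continuous fun t => W t ω) :
    ∃ X : ι → Ω → ℝ, Measurable (uncurry X) ∧ (∀ ω, Continuous fun t => X t ω) ∧
      ∀ᵐ ω ∂P, ∀ t, X t ω = W t ω := by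
  classical
  obtain ⟨N, hN, hNm, hN0⟩ := exists_measurable_superset_of_null (ae_iff.1 hcont)
  have hXcont : ∀ ω, Continuous fun t => if ω ∈ N then 0 else W t ω := by
    intro ω
    by_cases hω : ω ∈ N
    · simpa only [hω, if_true] using continuous_const
    · simpa only [hω, if_false] using not_not.1 fun h => hω (hN h)
  refine ⟨fun t ω => if ω ∈ N then 0 else W t ω,
    measurable_uncurry_of_continuous_of_measurable hXcont fun t =>
      measurable_const.ite hNm (hW t), hXcont, ?_⟩
  filter_upwards [measure_eq_zero_iff_ae_notMem.1 hN0] with ω hω t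
  simp only [hω, if_false]

lemma integral_integral_eq_integral_sub_mul {f : ℝ → ℝ} (hf : Continuous f) (a b : ℝ) :
    ∫ t in a..b, ∫ s in a..t, f s = ∫ t in a..b, (b - t) * f t := by
  have hparts := intervalIntegral.integral_mul_deriv_eq_deriv_mul (a := a) (b := b)
    (u := fun t => ∫ s in a..t, f s) (v := fun t => t - b) (v' := fun _ => 1)
    (fun t _ => (hf.integral_hasStrictDerivAt a t).hasDerivAt)
    (fun t _ => (hasDerivAt_id t).sub_const b) (hf.intervalIntegrable _ _)
    intervalIntegrable_const
  simp only [mul_one, sub_self, mul_zero, intervalIntegral.integral_same, zero_mul,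
    zero_sub] at hparts
  rw [hparts, ← intervalIntegral.integral_neg]
  congr 1 with t
  ring

lemma iteratedIntegrals_combination_eq {f : ℝ → ℝ} (hf : Continuous f) (Δ : ℝ) :
    (∫ t in (0:ℝ)..Δ, (t * f t - ∫ s in (0:ℝ)..t, f s)) - (∫ t in (0:ℝ)..Δ, ∫ s in (0:ℝ)..t, f s)
      - Δ * (Δ / 2 * f Δ - ∫ t in (0:ℝ)..Δ, f t)
      = (∫ t in (0:ℝ)..Δ, (3 * t - Δ) * f t) - Δ ^ 2 / 2 * f Δ := by
  have hF : Continuous fun t => ∫ s in (0:ℝ)..t, f s :=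
    intervalIntegral.continuous_primitive (fun _ _ => hf.intervalIntegrable _ _) 0
  rw [intervalIntegral.integral_sub (Continuous.intervalIntegrable (by fun_prop) _ _)
    (hF.intervalIntegrable _ _), integral_integral_eq_integral_sub_mul hf]
  simp only [sub_mul, mul_assoc]
  simp (disch := exact (Continuous.intervalIntegrable (by fun_prop) _ _)) only
    [intervalIntegral.integral_sub, intervalIntegral.integral_const_mul]
  ring

lemma integral_linear_mul_self (a b : ℝ) :
    ∫ t in (0:ℝ)..b, (3 * t - a) * t = b ^ 3 - a * b ^ 2 / 2 := by
  -- `t ^ 1` rather than `t`: `simp` cannot match `∫ r * f x` against `∫ r * x`.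
  have h (t : ℝ) : (3 * t - a) * t = 3 * t ^ 2 - a * t ^ 1 := by ring
  simp only [h]
  simp (disch := exact (Continuous.intervalIntegrable (by fun_prop) _ _)) only
    [intervalIntegral.integral_sub, intervalIntegral.integral_const_mul, integral_pow]
  ring

lemma integral_linear_mul_min {s Δ : ℝ} (hs : 0 ≤ s) (hsΔ : s ≤ Δ) :
    ∫ t in (0:ℝ)..Δ, (3 * t - Δ) * min s t = (Δ ^ 2 * s + Δ * s ^ 2 - s ^ 3) / 2 := by
  have hc : Continuous fun t => (3 * t - Δ) * min s t := by fun_prop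
  rw [← intervalIntegral.integral_add_adjacent_intervals (b := s) (hc.intervalIntegrable _ _)
    (hc.intervalIntegrable _ _)]
  have h₁ : ∫ t in (0:ℝ)..s, (3 * t - Δ) * min s t = ∫ t in (0:ℝ)..s, (3 * t - Δ) * t :=
    intervalIntegral.integral_congr fun t ht => by
      rw [min_eq_right (uIcc_of_le hs ▸ ht).2]
  have h₂ : ∫ t in s..Δ, (3 * t - Δ) * min s t = ∫ t in s..Δ, (3 * s) * t ^ 1 - Δ * s :=
    intervalIntegral.integral_congr fun t ht => by
      rw [min_eq_left (uIcc_of_le hsΔ ▸ ht).1]; ring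
  rw [h₁, h₂, integral_linear_mul_self]
  simp (disch := exact (Continuous.intervalIntegrable (by fun_prop) _ _)) only
    [intervalIntegral.integral_sub, intervalIntegral.integral_const_mul, integral_pow,
      intervalIntegral.integral_const, smul_eq_mul]
  ring

lemma integral_linear_mul_integral_linear_mul_min {Δ : ℝ} (hΔ : 0 ≤ Δ) :
    ∫ s in (0:ℝ)..Δ, (3 * s - Δ) * ∫ t in (0:ℝ)..Δ, (3 * t - Δ) * min s t = 17 * Δ ^ 5 / 60 := by
  have hpoly : ∫ s in (0:ℝ)..Δ, (3 * s - Δ) * ∫ t in (0:ℝ)..Δ, (3 * t - Δ) * min s t =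
      ∫ s in (0:ℝ)..Δ, (-3/2) * s ^ 4 + 2 * Δ * s ^ 3 + Δ ^ 2 * s ^ 2 + (- Δ ^ 3 / 2) * s ^ 1 :=
    intervalIntegral.integral_congr fun s hs => by
      rw [integral_linear_mul_min (uIcc_of_le hΔ ▸ hs).1 (uIcc_of_le hΔ ▸ hs).2]; ring
  rw [hpoly]
  simp (disch := exact (Continuous.intervalIntegrable (by fun_prop) _ _)) only
    [intervalIntegral.integral_add, intervalIntegral.integral_const_mul, integral_pow]
  ring

namespace IsBrownianMotion

variable {Ω : Type*} {mΩ : MeasurableSpace Ω} {P : Measure Ω} {W : ℝ → Ω → ℝ}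

lemma hasLaw (hW : IsBrownianMotion P W) {t : ℝ} (ht : 0 ≤ t) :
    HasLaw (W t) (gaussianReal 0 t.toNNReal) P where
  aemeasurable := (hW.measurable t).aemeasurable
  map_eq := by
    have h := hW.gaussian_incr 0 t le_rfl ht
    rw [sub_zero] at h
    rw [← h]
    refine Measure.map_congr ?_
    filter_upwards [hW.init] with ω h0
    rw [h0, sub_zero]

lemma isPreBrownianReal (hW : IsBrownianMotion P W) : IsPreBrownianReal (fun t : ℝ≥0 => W t) P :=
  HasIndepIncrements.isPreBrownianReal_of_hasLaw (fun t => by simpa using hW.hasLaw t.2)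
    fun n t ht => hW.indep_incr n (fun i => t i) (NNReal.coe_mono.comp ht) fun i => (t i).2

end IsBrownianMotion

namespace ProbabilityTheory.IsPreBrownianReal

variable {Ω : Type*} {mΩ : MeasurableSpace Ω} {P : Measure Ω}

lemma integral_mul_eval {B : ℝ≥0 → Ω → ℝ} (hB : IsPreBrownianReal B P) (s t : ℝ≥0) :
    ∫ ω, B s ω * B t ω ∂P = min s t := by
  have := hB.isGaussianProcess.isProbabilityMeasure
  have h := covariance_eq_sub (hB.isGaussianProcess.hasGaussianLaw_eval s).memLp_two
    (hB.isGaussianProcess.hasGaussianLaw_eval t).memLp_two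
  rw [hB.covariance_eval, hB.integral_eval, hB.integral_eval, mul_zero, sub_zero] at h
  exact h.symm

variable {X : ℝ → Ω → ℝ} (hB : IsPreBrownianReal (fun t : ℝ≥0 => X t) P)
include hB

lemma memLp_two_of_nonneg {t : ℝ} (ht : 0 ≤ t) : MemLp (X t) 2 P := by
  simpa [Real.coe_toNNReal _ ht] using
    (hB.isGaussianProcess.hasGaussianLaw_eval t.toNNReal).memLp_two

lemma integral_mul_of_nonneg {s t : ℝ} (hs : 0 ≤ s) (ht : 0 ≤ t) :
    ∫ ω, X s ω * X t ω ∂P = min s t := by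
  simpa [Real.coe_toNNReal _ hs, Real.coe_toNNReal _ ht] using
    hB.integral_mul_eval s.toNNReal t.toNNReal

lemma integral_sq_of_nonneg {t : ℝ} (ht : 0 ≤ t) : ∫ ω, X t ω ^ 2 ∂P = t := by
  simpa [sq] using hB.integral_mul_of_nonneg ht ht

variable {Δ : ℝ}

lemma ae_restrict_memLp_linear_mul :
    ∀ᵐ t ∂volume.restrict (Ioc 0 Δ), MemLp (fun ω => (3 * t - Δ) * X t ω) 2 P ∧
      ∫ ω, ((3 * t - Δ) * X t ω) ^ 2 ∂P ≤ 4 * Δ ^ 3 := by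
  refine ae_restrict_of_forall_mem measurableSet_Ioc fun t ⟨ht0, htΔ⟩ => ⟨?_, ?_⟩
  · exact (hB.memLp_two_of_nonneg ht0.le).const_mul _
  · simp_rw [mul_pow]
    rw [integral_const_mul, hB.integral_sq_of_nonneg ht0.le]
    have hweight : (3 * t - Δ) ^ 2 ≤ 4 * Δ ^ 2 := by nlinarith
    calc (3 * t - Δ) ^ 2 * t ≤ 4 * Δ ^ 2 * Δ := mul_le_mul hweight htΔ ht0.le (by positivity)
      _ = 4 * Δ ^ 3 := by ring

variable (hΔ : 0 ≤ Δ)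
include hΔ

lemma ae_dirac_memLp :
    ∀ᵐ t ∂Measure.dirac Δ, MemLp (X t) 2 P ∧ ∫ ω, X t ω ^ 2 ∂P ≤ Δ := by
  rw [ae_dirac_eq]
  exact ⟨hB.memLp_two_of_nonneg hΔ, (hB.integral_sq_of_nonneg hΔ).le⟩

variable (hX : Measurable (uncurry X))
include hX

lemma integrable_integral_linear_mul_mul_self :
    Integrable (fun ω => (∫ t in (0:ℝ)..Δ, (3 * t - Δ) * X t ω) *
      ∫ t in (0:ℝ)..Δ, (3 * t - Δ) * X t ω) P := by
  have := hB.isGaussianProcess.isProbabilityMeasure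
  simp_rw [intervalIntegral.integral_of_le hΔ]
  exact integrable_integral_mul_integral_of_integral_sq_le (measurable_uncurry_linear_mul hX 3 Δ)
    (measurable_uncurry_linear_mul hX 3 Δ) hB.ae_restrict_memLp_linear_mul
    hB.ae_restrict_memLp_linear_mul

lemma integral_integral_linear_mul_mul_self :
    ∫ ω, (∫ t in (0:ℝ)..Δ, (3 * t - Δ) * X t ω) * (∫ t in (0:ℝ)..Δ, (3 * t - Δ) * X t ω) ∂P =
      17 * Δ ^ 5 / 60 := by
  have := hB.isGaussianProcess.isProbabilityMeasure
  simp_rw [intervalIntegral.integral_of_le hΔ]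
  rw [integral_integral_mul_integral_of_integral_sq_le (measurable_uncurry_linear_mul hX 3 Δ)
    (measurable_uncurry_linear_mul hX 3 Δ) hB.ae_restrict_memLp_linear_mul
    hB.ae_restrict_memLp_linear_mul,
    ← integral_linear_mul_integral_linear_mul_min hΔ, intervalIntegral.integral_of_le hΔ]
  refine setIntegral_congr_fun measurableSet_Ioc fun s hs => ?_
  rw [intervalIntegral.integral_of_le hΔ, ← integral_const_mul]
  refine setIntegral_congr_fun measurableSet_Ioc fun t ht => ?_
  rw [← hB.integral_mul_of_nonneg hs.1.le ht.1.le, ← integral_const_mul, ← integral_const_mul]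
  congr 1 with ω
  ring

lemma integrable_integral_linear_mul_mul_eval :
    Integrable (fun ω => (∫ t in (0:ℝ)..Δ, (3 * t - Δ) * X t ω) * X Δ ω) P := by
  have := hB.isGaussianProcess.isProbabilityMeasure
  simp_rw [intervalIntegral.integral_of_le hΔ]
  simpa only [integral_dirac] using integrable_integral_mul_integral_of_integral_sq_le
    (measurable_uncurry_linear_mul hX 3 Δ) hX hB.ae_restrict_memLp_linear_mul
    (hB.ae_dirac_memLp hΔ)

lemma integral_integral_linear_mul_mul_eval :
    ∫ ω, (∫ t in (0:ℝ)..Δ, (3 * t - Δ) * X t ω) * X Δ ω ∂P = Δ ^ 3 / 2 := by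
  have := hB.isGaussianProcess.isProbabilityMeasure
  simp_rw [intervalIntegral.integral_of_le hΔ]
  have h := integral_integral_mul_integral_of_integral_sq_le
    (measurable_uncurry_linear_mul hX 3 Δ) hX hB.ae_restrict_memLp_linear_mul
    (hB.ae_dirac_memLp hΔ)
  simp only [integral_dirac] at h
  rw [h, show Δ ^ 3 / 2 = Δ ^ 3 - Δ * Δ ^ 2 / 2 by ring, ← integral_linear_mul_self,
    intervalIntegral.integral_of_le hΔ]
  refine setIntegral_congr_fun measurableSet_Ioc fun s hs => ?_
  simp_rw [mul_assoc]
  rw [integral_const_mul, hB.integral_mul_of_nonneg hs.1.le hΔ, min_eq_left hs.2]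

lemma integral_integral_linear_mul_sub_sq :
    ∫ ω, ((∫ t in (0:ℝ)..Δ, (3 * t - Δ) * X t ω) - Δ ^ 2 / 2 * X Δ ω) ^ 2 ∂P = Δ ^ 5 / 30 := by
  have hXX : Integrable (fun ω => X Δ ω * X Δ ω) P :=
    (hB.memLp_two_of_nonneg hΔ).integrable_mul (hB.memLp_two_of_nonneg hΔ)
  rw [integral_sub_const_mul_sq (hB.integrable_integral_linear_mul_mul_self hΔ hX)
    (hB.integrable_integral_linear_mul_mul_eval hΔ hX) hXX,
    hB.integral_integral_linear_mul_mul_self hΔ hX, hB.integral_integral_linear_mul_mul_eval hΔ hX,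
    hB.integral_mul_of_nonneg hΔ hΔ, min_self]
  ring

end ProbabilityTheory.IsPreBrownianReal

theorem expectation_deltaV_sq_general {Ω : Type*} [MeasurableSpace Ω] (P : Measure Ω)
    (W : ℝ → Ω → ℝ) (hW : IsBrownianMotion P W)
    (Δt : ℝ) (hΔt : 0 < Δt) :
    ∫ ω, ((1 / 9 : ℝ) * ((∫ t in (0:ℝ)..Δt, (t * W t ω - ∫ s in (0:ℝ)..t, W s ω)) - (∫ t in (0:ℝ)..Δt, ∫ s in (0:ℝ)..t, W s ω) - Δt * (Δt / 2 * W Δt ω - ∫ t in (0:ℝ)..Δt, W t ω))) ^ 2 ∂P = Δt ^ 5 / 2430 := by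
  obtain ⟨X, hX, hXcont, hXW⟩ :=
    exists_measurable_modification_of_ae_continuous hW.measurable hW.cont
  have hB : IsPreBrownianReal (fun t : ℝ≥0 => X t) P :=
    hW.isPreBrownianReal.congr fun t => by filter_upwards [hXW] with ω h using (h t).symm
  calc _ = ∫ ω, (1 / 9 : ℝ) ^ 2 *
        ((∫ t in (0:ℝ)..Δt, (3 * t - Δt) * X t ω) - Δt ^ 2 / 2 * X Δt ω) ^ 2 ∂P := by
        refine integral_congr_ae ?_
        filter_upwards [hXW] with ω hω
        simp only [← hω, iteratedIntegrals_combination_eq (hXcont ω), mul_pow]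
    _ = Δt ^ 5 / 2430 := by
        rw [integral_const_mul, hB.integral_integral_linear_mul_sub_sq hΔt.le hX]
        ring

/-- `E[ ΔV² ] = Δt⁵/2430` where `ΔV = (1/9)·(I_{(0,1,0)} − I_{(1,0,0)} − Δt·ΔU)`. -/
theorem expectation_deltaV_sq {Ω : Type*} [MeasurableSpace Ω] (P : Measure Ω)
    [IsProbabilityMeasure P] (W : ℝ → Ω → ℝ) (hW : IsBrownianMotion P W)
    (Δt : ℝ) (hΔt : 0 < Δt) :
    ∫ ω, ((1 / 9 : ℝ) * ((∫ t in (0:ℝ)..Δt, (t * W t ω - ∫ s in (0:ℝ)..t, W s ω)) - (∫ t in (0:ℝ)..Δt, ∫ s in (0:ℝ)..t, W s ω) - Δt * (Δt / 2 * W Δt ω - ∫ t in (0:ℝ)..Δt, W t ω))) ^ 2 ∂P = Δt ^ 5 / 2430 :=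
  expectation_deltaV_sq_general P W hW Δt hΔt
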